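/- arXiv:1912.07108 — 2 statements merged into one kernel-verified Lean document; each statement's English description precedes it below -/
import Mathlib

section
/- In a unital Banach algebra, if a ∈ A satisfies ‖a² − a‖ < 1/4, then the element s := Σ_{n≥0} C(2n,n)(a − a²)ⁿ satisfies s² = (1 − 4a + 4a²)⁻¹, and consequently p := (a − 1/2)s + 1/2 satisfies (2p − 1)² = 1, i.e. p is an idempotent. -/
/-!
The generating function of the central binomial coefficients is `(1 - 4t)^(-1/2)`, i.e.
`∑_{i+j=n} C(2i,i) C(2j,j) = 4ⁿ`. By the Cauchy product formula, for `x = a - a²` the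
series `s = ∑ C(2n,n) xⁿ` therefore satisfies `s² = (1 - 4x)⁻¹ = ((2a - 1)²)⁻¹`, and `s`
commutes with `2a - 1`. Hence `2p - 1 = (2a - 1) s` squares to `1`, which makes `p` idempotent.
-/

open Finset

namespace Nat

theorem two_mul_sum_antidiagonal_fst_mul_centralBinom_mul (n : ℕ) :
    2 * ∑ p ∈ antidiagonal n, p.1 * p.1.centralBinom * p.2.centralBinom =
      n * ∑ p ∈ antidiagonal n, p.1.centralBinom * p.2.centralBinom := by
  rw [two_mul]
  nth_rw 2 [← Finset.Nat.sum_antidiagonal_swap]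
  rw [← sum_add_distrib, mul_sum]
  refine sum_congr rfl fun p hp => ?_
  rw [HasAntidiagonal.mem_antidiagonal] at hp
  simp only [Prod.fst_swap, Prod.snd_swap, ← hp]
  ring

theorem sum_antidiagonal_succ_fst_mul_centralBinom_mul (n : ℕ) :
    ∑ p ∈ antidiagonal (n + 1), p.1 * p.1.centralBinom * p.2.centralBinom =
      4 * ∑ p ∈ antidiagonal n, p.1 * p.1.centralBinom * p.2.centralBinom +
        2 * ∑ p ∈ antidiagonal n, p.1.centralBinom * p.2.centralBinom := by
  rw [Finset.Nat.sum_antidiagonal_succ, mul_sum, mul_sum, ← sum_add_distrib]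
  simp only [zero_mul, zero_add, succ_mul_centralBinom_succ]
  refine sum_congr rfl fun p _ => ?_
  ring

/- With `S n = ∑ C(2i,i) C(2j,j)` and `T n = ∑ i C(2i,i) C(2j,j)` over `i + j = n`, the two
lemmas above give `(n + 1) S (n + 1) = 2 T (n + 1) = 8 T n + 4 S n = 4 (n + 1) S n`. -/
theorem sum_antidiagonal_centralBinom_mul_centralBinom (n : ℕ) :
    ∑ p ∈ antidiagonal n, p.1.centralBinom * p.2.centralBinom = 4 ^ n := by
  induction n with
  | zero => simp
  | succ n ih =>
    have h := two_mul_sum_antidiagonal_fst_mul_centralBinom_mul (n + 1)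
    rw [sum_antidiagonal_succ_fst_mul_centralBinom_mul, mul_add, ← mul_assoc, ← mul_assoc,
      mul_comm 2 4, mul_assoc, two_mul_sum_antidiagonal_fst_mul_centralBinom_mul, ih] at h
    refine Nat.eq_of_mul_eq_mul_left (add_one_pos n) ?_
    rw [← h, pow_succ]
    ring

end Nat

theorem isIdempotentElem_of_mul_self_two_mul_sub_one_eq_one {R : Type*} [Ring R]
    (h2 : IsUnit (2 : R)) {p : R} (h : (2 * p - 1) * (2 * p - 1) = 1) : IsIdempotentElem p := by
  have h0 : 2 * (2 * (p * p - p)) = 0 := by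
    rw [← sub_self (1 : R)]
    nth_rw 1 [← h]
    noncomm_ring
  exact sub_eq_zero.mp (h2.mul_right_eq_zero.mp (h2.mul_right_eq_zero.mp h0))

section CentralBinomSeries

variable {R : Type*} [NormedRing R]

noncomputable def centralBinomSeries (x : R) : R :=
  ∑' n : ℕ, (n.centralBinom : R) * x ^ n

theorem norm_four_mul_lt_one {x : R} (hx : ‖x‖ < 1 / 4) : ‖4 * x‖ < 1 :=
  calc ‖4 * x‖ = ‖4 • x‖ := by rw [nsmul_eq_mul, Nat.cast_ofNat]
    _ ≤ 4 * ‖x‖ := by simpa using norm_nsmul_le (n := 4) (a := x)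
    _ < 1 := by linarith

theorem summable_norm_centralBinom_mul_pow {x : R} (hx : ‖x‖ < 1 / 4) :
    Summable fun n : ℕ => ‖(n.centralBinom : R) * x ^ n‖ := by
  have hgeom : Summable fun n : ℕ => (4 * ‖x‖) ^ n :=
    summable_geometric_of_lt_one (by positivity) (by linarith)
  refine Summable.of_norm_bounded_eventually_nat hgeom ?_
  filter_upwards [eventually_norm_pow_le x] with n hn
  calc ‖‖(n.centralBinom : R) * x ^ n‖‖ = ‖n.centralBinom • x ^ n‖ := by
        rw [norm_norm, nsmul_eq_mul]
    _ ≤ n.centralBinom * ‖x ^ n‖ := norm_nsmul_le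
    _ ≤ 4 ^ n * ‖x‖ ^ n := by gcongr; exact_mod_cast n.centralBinom_le_four_pow
    _ = (4 * ‖x‖) ^ n := (mul_pow _ _ _).symm

theorem sum_antidiagonal_centralBinom_mul_pow_mul (x : R) (n : ℕ) :
    ∑ p ∈ antidiagonal n,
        (p.1.centralBinom : R) * x ^ p.1 * ((p.2.centralBinom : R) * x ^ p.2) = (4 * x) ^ n := by
  have hterm : ∀ p ∈ antidiagonal n,
      (p.1.centralBinom : R) * x ^ p.1 * ((p.2.centralBinom : R) * x ^ p.2) =
        ((p.1.centralBinom * p.2.centralBinom : ℕ) : R) * x ^ n := fun p hp => by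
    rw [← HasAntidiagonal.mem_antidiagonal.mp hp, mul_assoc, ← mul_assoc (x ^ p.1),
      ← (Nat.cast_commute p.2.centralBinom (x ^ p.1)).eq, Nat.cast_mul, pow_add]
    noncomm_ring
  rw [sum_congr rfl hterm, ← sum_mul, ← Nat.cast_sum,
    Nat.sum_antidiagonal_centralBinom_mul_centralBinom, (Commute.ofNat_left 4 x).mul_pow,
    Nat.cast_pow, Nat.cast_ofNat]

theorem centralBinomSeries_mul_self [CompleteSpace R] {x : R} (hx : ‖x‖ < 1 / 4) :
    centralBinomSeries x * centralBinomSeries x = Ring.inverse (1 - 4 * x) := by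
  rw [centralBinomSeries, tsum_mul_tsum_eq_tsum_sum_antidiagonal_of_summable_norm
    (summable_norm_centralBinom_mul_pow hx) (summable_norm_centralBinom_mul_pow hx),
    ← geom_series_eq_inverse _ (norm_four_mul_lt_one hx)]
  exact tsum_congr (sum_antidiagonal_centralBinom_mul_pow_mul x)

theorem Commute.centralBinomSeries_right {x y : R} (h : Commute y x) :
    Commute y (centralBinomSeries x) :=
  Commute.tsum_right y fun n => (Nat.cast_commute _ y).symm.mul_right (h.pow_right n)

end CentralBinomSeries

theorem centralBinom_series_idempotent_general {A : Type*} [NormedRing A]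
    [CompleteSpace A] [NormedAlgebra ℂ A]
    (a : A) (hν : ‖a * a - a‖ < 1 / 4)
    (s p : A)
    (hs : s = ∑' n : ℕ, (Nat.centralBinom n : A) * (a - a * a) ^ n)
    (hp : p = (a - (1 / 2 : ℂ) • (1 : A)) * s + (1 / 2 : ℂ) • (1 : A)) :
    IsUnit (1 - 4 * a + 4 * (a * a)) ∧
    s * s = Ring.inverse (1 - 4 * a + 4 * (a * a)) ∧
    (2 * p - 1) * (2 * p - 1) = 1 ∧
    p * p = p := by
  have hx : ‖a - a * a‖ < 1 / 4 := by rwa [← norm_neg, neg_sub]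
  have hsq : 1 - 4 * a + 4 * (a * a) = 1 - 4 * (a - a * a) := by noncomm_ring
  have hunit : IsUnit (1 - 4 * a + 4 * (a * a)) :=
    hsq ▸ isUnit_one_sub_of_norm_lt_one (norm_four_mul_lt_one hx)
  have hss : s * s = Ring.inverse (1 - 4 * a + 4 * (a * a)) :=
    hsq ▸ hs ▸ centralBinomSeries_mul_self hx
  have hcomm : Commute (2 * a - 1) s := by
    have ha : Commute a (a - a * a) :=
      (Commute.refl a).sub_right ((Commute.refl a).mul_right (Commute.refl a))
    exact hs ▸ (((Commute.ofNat_left 2 _).mul_left ha).sub_left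
      (Commute.one_left _)).centralBinomSeries_right
  have htwo_half : (2 : A) * (1 / 2 : ℂ) • (1 : A) = 1 := by
    rw [mul_smul_comm, mul_one, ← map_ofNat (algebraMap ℂ A) 2, Algebra.smul_def, ← map_mul]
    norm_num
  have h2p : 2 * p - 1 = (2 * a - 1) * s := by
    rw [hp, mul_add, ← mul_assoc, mul_sub, htwo_half]
    noncomm_ring
  have hinv : (2 * p - 1) * (2 * p - 1) = 1 := by
    rw [h2p, hcomm.symm.mul_mul_mul_comm, hss,
      show (2 * a - 1) * (2 * a - 1) = 1 - 4 * a + 4 * (a * a) by noncomm_ring]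
    exact Ring.mul_inverse_cancel _ hunit
  have htwo : IsUnit (2 : A) := by
    rw [← map_ofNat (algebraMap ℂ A) 2]
    exact (IsUnit.mk0 (2 : ℂ) two_ne_zero).map _
  exact ⟨hunit, hss, hinv, (isIdempotentElem_of_mul_self_two_mul_sub_one_eq_one htwo hinv).eq⟩

/-- If `‖a² − a‖ < 1/4`, then `s = Σ C(2n,n)(a − a²)ⁿ` satisfies
`s² = (1 − 4a + 4a²)⁻¹`, and `p = (a − 1/2)s + 1/2` satisfies `(2p − 1)² = 1`,
i.e. `p` is an idempotent. -/
theorem centralBinom_series_idempotent {A : Type*} [NormedRing A] [NormOneClass A]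
    [CompleteSpace A] [NormedAlgebra ℂ A]
    (a : A) (hν : ‖a * a - a‖ < 1 / 4)
    (s p : A)
    (hs : s = ∑' n : ℕ, (Nat.centralBinom n : A) * (a - a * a) ^ n)
    (hp : p = (a - (1 / 2 : ℂ) • (1 : A)) * s + (1 / 2 : ℂ) • (1 : A)) :
    IsUnit (1 - 4 * a + 4 * (a * a)) ∧
    s * s = Ring.inverse (1 - 4 * a + 4 * (a * a)) ∧
    (2 * p - 1) * (2 * p - 1) = 1 ∧
    p * p = p :=
  centralBinom_series_idempotent_general a hν s p hs hp
end

section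
/- Let ω_x be the weight on the bicyclic monoid BC given by ω_x(q^α p^β) = exp(x(α+β)) for x > 0. If ‖·‖₀ is any submultiplicative norm on ℓ¹(BC, ω_x) equivalent to ‖·‖_{ω_x}, then ‖δ_s‖₀ ≥ exp(x|α − β|) for s = q^α p^β. In particular ‖δ_p‖₀ ≥ e^x and ‖δ_q‖₀ ≥ e^x, so the witnesses a = δ_p, b = δ_q to Dedekind-infiniteness (ab = δ_e, ba ≠ δ_e) have ‖a‖₀‖b‖₀ ≥ e^{2x} under every equivalent norm. -/
/-- The defining relation of the bicyclic monoid `BC = ⟨p, q : pq = e⟩`. -/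
def bicyclicRel : FreeMonoid (Fin 2) → FreeMonoid (Fin 2) → Prop :=
  fun x y => x = FreeMonoid.of 0 * FreeMonoid.of 1 ∧ y = 1

/-- The bicyclic monoid. -/
def BC := PresentedMonoid bicyclicRel

instance : Monoid BC := by unfold BC; infer_instance

/-- The generator `p` of `BC`. -/
def BC.p : BC := PresentedMonoid.of bicyclicRel 0

/-- The generator `q` of `BC`. -/
def BC.q : BC := PresentedMonoid.of bicyclicRel 1

lemma BC.pq : BC.p * BC.q = 1 := by
  show PresentedMonoid.mk bicyclicRel (FreeMonoid.of 0) *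
    PresentedMonoid.mk bicyclicRel (FreeMonoid.of 1) = 1
  rw [← map_mul]
  exact Con.eq _ |>.mpr (ConGen.Rel.of _ _ ⟨rfl, rfl⟩)

lemma BC.ppqq (a : ℕ) : BC.p ^ a * BC.q ^ a = 1 := by
  induction a with
  | zero => simp
  | succ n ih =>
    rw [pow_succ, pow_succ']
    calc BC.p ^ n * BC.p * (BC.q * BC.q ^ n)
        = BC.p ^ n * (BC.p * BC.q) * BC.q ^ n := by group
      _ = 1 := by rw [BC.pq, mul_one, ih]

lemma BC.pq_pow (a b : ℕ) : BC.p ^ a * BC.q ^ b = BC.q ^ (b - a) * BC.p ^ (a - b) := by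
  rcases le_total a b with h | h
  · have : b = a + (b - a) := by omega
    rw [this, pow_add, ← mul_assoc, BC.ppqq, one_mul]
    simp [Nat.sub_eq_zero_of_le h, (by omega : a + (b-a) - a = b - a)]
  · have : a = (a - b) + b := by omega
    rw [this, pow_add, mul_assoc, BC.ppqq, mul_one]
    simp [Nat.sub_eq_zero_of_le h, (by omega : a - b + b - b = a - b)]

/-- The index homomorphism `BC → ℤ`, `q ↦ 1`, `p ↦ -1`. -/
noncomputable def BC.chi : BC →* Multiplicative ℤ :=
  PresentedMonoid.lift (fun i : Fin 2 => if i = 0 then Multiplicative.ofAdd (-1 : ℤ)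
    else Multiplicative.ofAdd (1 : ℤ))
    (by rintro a b ⟨rfl, rfl⟩; simp)

lemma BC.chi_qp (γ δ : ℕ) :
    BC.chi (BC.q ^ γ * BC.p ^ δ) = Multiplicative.ofAdd ((γ : ℤ) - (δ : ℤ)) := by
  have hq : BC.chi BC.q = Multiplicative.ofAdd (1 : ℤ) := rfl
  have hp : BC.chi BC.p = Multiplicative.ofAdd (-1 : ℤ) := rfl
  rw [map_mul, map_pow, map_pow, hq, hp, ← ofAdd_nsmul, ← ofAdd_nsmul, ← ofAdd_add]
  congr 1
  push_cast
  ring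

/-- normal form existence for powers of `q^α p^β` -/
lemma BC.pow_normal (α β : ℕ) : ∀ n : ℕ, ∃ γ δ : ℕ, (BC.q ^ α * BC.p ^ β) ^ n = BC.q ^ γ * BC.p ^ δ := by
  intro n
  induction n with
  | zero => exact ⟨0, 0, by simp⟩
  | succ n ih =>
    obtain ⟨γ, δ, h⟩ := ih
    rw [pow_succ, h]
    refine ⟨γ + (α - δ), (δ - α) + β, ?_⟩
    calc BC.q ^ γ * BC.p ^ δ * (BC.q ^ α * BC.p ^ β)
        = BC.q ^ γ * (BC.p ^ δ * BC.q ^ α) * BC.p ^ β := by rw [mul_assoc, mul_assoc, mul_assoc]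
      _ = BC.q ^ γ * (BC.q ^ (α - δ) * BC.p ^ (δ - α)) * BC.p ^ β := by rw [BC.pq_pow]
      _ = BC.q ^ (γ + (α - δ)) * BC.p ^ ((δ - α) + β) := by
          rw [pow_add, pow_add]; rw [mul_assoc, mul_assoc, mul_assoc]

/-- The word length of an element of `BC`: `ℓ(q^α p^β) = α + β` (by uniqueness
of normal forms this infimum is attained at the normal form). -/
noncomputable def BC.len (s : BC) : ℕ :=
  sInf {m : ℕ | ∃ α β : ℕ, α + β = m ∧ s = BC.q ^ α * BC.p ^ β}

lemma BC.len_pow_ge (α β n : ℕ) :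
    n * ((α - β) + (β - α)) ≤ BC.len ((BC.q ^ α * BC.p ^ β) ^ n) := by
  apply le_csInf
  · obtain ⟨γ, δ, h⟩ := BC.pow_normal α β n
    exact ⟨γ + δ, γ, δ, rfl, h⟩
  · rintro m ⟨γ, δ, rfl, h⟩
    -- chi of both sides
    have h1 : ((γ : ℤ) - δ) = n * ((α : ℤ) - β) := by
      have := congrArg BC.chi h
      rw [BC.chi_qp, map_pow, BC.chi_qp, ← ofAdd_nsmul] at this
      have := Multiplicative.ofAdd.injective this
      simpa using this.symm
    have h2 : ((n : ℤ)) * |(α:ℤ) - β| = |(γ:ℤ) - δ| := by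
      rw [h1, abs_mul, Nat.abs_cast]
    have h3 : |(α:ℤ) - β| = ((α - β) + (β - α) : ℕ) := by
      rcases le_total α β with hl | hl
      · rw [abs_of_nonpos (by push_cast; omega)]; push_cast; omega
      · rw [abs_of_nonneg (by push_cast; omega)]; push_cast; omega
    have h4 : |(γ:ℤ) - δ| ≤ (γ:ℤ) + δ := by
      rcases abs_cases ((γ:ℤ) - δ) with ⟨he, _⟩ | ⟨he, _⟩ <;> omega
    have h5 : ((n : ℤ)) * ((((α - β) + (β - α) : ℕ)) : ℤ) ≤ (γ : ℤ) + (δ : ℤ) := by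
      rw [← h3]; linarith [h2, h4]
    exact_mod_cast h5

open Classical in
/-- The point mass `δ_x`. -/
noncomputable def delta (x : BC) : BC → ℂ := fun s => if s = x then 1 else 0

/-- The convolution product on `ℓ¹(BC)`. -/
noncomputable def conv (f g : BC → ℂ) : BC → ℂ :=
  fun r => ∑' x : {x : BC × BC // x.1 * x.2 = r}, f x.1.1 * g x.1.2

/-- Membership in `ℓ¹(BC, ω)`. -/
def MemL1 (ω : BC → ℝ) (f : BC → ℂ) : Prop := Summable fun s => ‖f s‖ * ω s

/-- The weighted `ℓ¹` norm. -/
noncomputable def wnorm (ω : BC → ℝ) (f : BC → ℂ) : ℝ := ∑' s, ‖f s‖ * ω s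

open Classical in
lemma conv_delta (a b : BC) : conv (delta a) (delta b) = delta (a * b) := by
  funext r
  show (∑' x : {x : BC × BC // x.1 * x.2 = r}, delta a x.1.1 * delta b x.1.2) = _
  by_cases h : a * b = r
  · rw [tsum_eq_single (⟨(a, b), h⟩ : {x : BC × BC // x.1 * x.2 = r})]
    · simp [delta, h.symm]
    · rintro ⟨⟨u, v⟩, huv⟩ hne
      have : u ≠ a ∨ v ≠ b := by
        by_contra hc
        push_neg at hc
        exact hne (Subtype.ext (by simp [hc.1, hc.2]))
      rcases this with h' | h' <;> simp [delta, h']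
  · have : ∀ x : {x : BC × BC // x.1 * x.2 = r}, delta a x.1.1 * delta b x.1.2 = 0 := by
      rintro ⟨⟨u, v⟩, huv⟩
      by_cases hu : u = a
      · by_cases hv : v = b
        · exact absurd (hu ▸ hv ▸ huv) h
        · simp [delta, hv]
      · simp [delta, hu]
    rw [tsum_congr this, tsum_zero]
    rw [delta, if_neg (fun hc : r = a * b => h hc.symm)]

open Classical in
lemma wnorm_delta (ω : BC → ℝ) (s : BC) : wnorm ω (delta s) = ω s := by
  rw [wnorm, tsum_eq_single s]
  · simp [delta]
  · intro t ht
    simp [delta, ht]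

open Classical in
lemma memL1_delta (ω : BC → ℝ) (s : BC) : MemL1 ω (delta s) := by
  apply summable_of_ne_finset_zero (s := {s})
  intro t ht
  simp only [Finset.mem_singleton] at ht
  simp [delta, ht]

/-- For the weight `ω_x(s) = exp(x·ℓ(s))` on the bicyclic monoid, any
submultiplicative norm `N` on `ℓ¹(BC, ω_x)` equivalent to `‖·‖_{ω_x}` satisfies
`N(δ_{q^α p^β}) ≥ exp(x|α − β|)`; in particular `N(δ_p), N(δ_q) ≥ e^x` and
`N(δ_p)N(δ_q) ≥ e^{2x}`. -/
theorem bicyclic_renorm_lower_bound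
    (x : ℝ) (hx : 0 < x) (ω : BC → ℝ)
    (hω : ∀ s : BC, ω s = Real.exp (x * (BC.len s : ℝ)))
    (N : (BC → ℂ) → ℝ)
    (hNsub : ∀ f g : BC → ℂ, MemL1 ω f → MemL1 ω g → N (conv f g) ≤ N f * N g)
    (hNequiv : ∃ m : ℝ, 0 < m ∧ ∀ f : BC → ℂ, MemL1 ω f →
      m⁻¹ * wnorm ω f ≤ N f ∧ N f ≤ m * wnorm ω f) :
    (∀ α β : ℕ, Real.exp (x * |(α : ℝ) - (β : ℝ)|) ≤ N (delta (BC.q ^ α * BC.p ^ β))) ∧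
    Real.exp x ≤ N (delta BC.p) ∧ Real.exp x ≤ N (delta BC.q) ∧
    Real.exp (2 * x) ≤ N (delta BC.p) * N (delta BC.q) := by
  obtain ⟨m, hm, hequiv⟩ := hNequiv
  have key : ∀ α β : ℕ, Real.exp (x * |(α:ℝ) - β|) ≤ N (delta (BC.q ^ α * BC.p ^ β)) := by
    intro α β
    set s := BC.q ^ α * BC.p ^ β with hs
    set c := N (delta s) with hc
    have hlow : ∀ k : ℕ, m⁻¹ * Real.exp (x * (BC.len (s ^ k) : ℝ)) ≤ N (delta (s ^ k)) := by
      intro k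
      have := (hequiv _ (memL1_delta ω (s ^ k))).1
      rwa [wnorm_delta, hω] at this
    have hc0 : 0 < c := by
      have h1 := hlow 1
      rw [pow_one] at h1
      have : 0 < m⁻¹ * Real.exp (x * (BC.len s : ℝ)) := by positivity
      linarith
    have hpow : ∀ n : ℕ, N (delta (s ^ (n + 1))) ≤ c ^ (n + 1) := by
      intro n
      induction n with
      | zero => simp [hc]
      | succ n ih =>
        calc N (delta (s ^ (n + 2)))
            = N (conv (delta (s ^ (n + 1))) (delta s)) := by rw [conv_delta, ← pow_succ]
          _ ≤ N (delta (s ^ (n + 1))) * N (delta s) :=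
              hNsub _ _ (memL1_delta ω _) (memL1_delta ω _)
          _ ≤ c ^ (n + 1) * c := mul_le_mul_of_nonneg_right ih hc0.le
          _ = c ^ (n + 2) := (pow_succ c (n + 1)).symm
    have habs : (((α - β) + (β - α) : ℕ) : ℝ) = |(α:ℝ) - β| := by
      rcases le_total α β with h | h
      · rw [Nat.sub_eq_zero_of_le h, abs_of_nonpos (sub_nonpos.mpr (Nat.cast_le.mpr h))]
        push_cast [h]
        ring
      · rw [Nat.sub_eq_zero_of_le h, abs_of_nonneg (sub_nonneg.mpr (Nat.cast_le.mpr h))]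
        push_cast [h]
        ring
    set E := Real.exp (x * |(α:ℝ) - β|) with hE
    have hEpos : 0 < E := Real.exp_pos _
    by_contra hcon
    push_neg at hcon
    have hr : c / E < 1 := (div_lt_one hEpos).mpr hcon
    have hr0 : 0 ≤ c / E := by positivity
    have hchain : ∀ n : ℕ, m⁻¹ ≤ (c / E) ^ (n + 1) := by
      intro n
      have l1 : ((((n + 1) * ((α - β) + (β - α)) : ℕ)) : ℝ) ≤ (BC.len (s ^ (n + 1)) : ℝ) :=
        Nat.cast_le.mpr (BC.len_pow_ge α β (n + 1))
      have l1' : ((n : ℝ) + 1) * |(α:ℝ) - β| ≤ (BC.len (s ^ (n + 1)) : ℝ) := by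
        rw [← habs]
        push_cast at l1 ⊢
        linarith
      have l2 : E ^ (n + 1) ≤ Real.exp (x * (BC.len (s ^ (n + 1)) : ℝ)) := by
        rw [hE, ← Real.exp_nat_mul]
        apply Real.exp_le_exp.mpr
        push_cast
        nlinarith [l1', hx.le, abs_nonneg ((α:ℝ) - β)]
      have l3 : m⁻¹ * E ^ (n + 1) ≤ c ^ (n + 1) := by
        calc m⁻¹ * E ^ (n + 1) ≤ m⁻¹ * Real.exp (x * (BC.len (s ^ (n + 1)) : ℝ)) :=
              mul_le_mul_of_nonneg_left l2 (inv_pos.mpr hm).le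
          _ ≤ N (delta (s ^ (n + 1))) := hlow (n + 1)
          _ ≤ c ^ (n + 1) := hpow n
      rw [div_pow, le_div_iff₀ (pow_pos hEpos _)]
      linarith
    have hlim : Filter.Tendsto (fun n : ℕ => (c / E) ^ (n + 1)) Filter.atTop (nhds 0) :=
      (tendsto_pow_atTop_nhds_zero_of_lt_one hr0 hr).comp (Filter.tendsto_add_atTop_nat 1)
    have h0 : m⁻¹ ≤ 0 := ge_of_tendsto hlim (Filter.Eventually.of_forall hchain)
    have : (0:ℝ) < m⁻¹ := inv_pos.mpr hm
    linarith
  have hp : Real.exp x ≤ N (delta BC.p) := by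
    have := key 0 1
    simpa using this
  have hq : Real.exp x ≤ N (delta BC.q) := by
    have := key 1 0
    simpa using this
  refine ⟨key, hp, hq, ?_⟩
  calc Real.exp (2 * x) = Real.exp x * Real.exp x := by
        rw [← Real.exp_add]; ring_nf
    _ ≤ N (delta BC.p) * N (delta BC.q) :=
        mul_le_mul hp hq (Real.exp_pos x).le (le_trans (Real.exp_pos x).le hp)
end
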